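/- arXiv:1806.01488 — 2 statements merged into one kernel-verified Lean document; each statement's English description precedes it below -/
import Mathlib

section
/- In the three-node causal Bayesian network Z → X, Z → Y, X → Y over finite types, the interventional distribution obtained from the truncated product formula satisfies the backdoor adjustment formula: P(Y=y | do(X=x₀)) = ∑_z P(Y=y | X=x₀, Z=z)·P(Z=z), where the sum is over z with P(X=x₀, Z=z) > 0 (assuming P(X=x₀|Z=z) > 0 for all z with P(Z=z) > 0). -/
open Finset

theorem sum_joint_eq_mul_of_sum_eq_one {γ α β : Type*} [Fintype β]
    {pZ : γ → ℝ} {pX : γ → α → ℝ} {pY : α → γ → β → ℝ} {p : γ → α → β → ℝ}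
    (hY1 : ∀ x z, ∑ y, pY x z y = 1) (hp : ∀ z x y, p z x y = pZ z * pX z x * pY x z y)
    (z : γ) (x : α) :
    ∑ y, p z x y = pZ z * pX z x := by
  simp only [hp, ← mul_sum, hY1, mul_one]

theorem backdoor_adjustment_general
    {γ α β : Type*} [Fintype γ] [Fintype α] [Fintype β]
    (pZ : γ → ℝ) (pX : γ → α → ℝ) (pY : α → γ → β → ℝ)
    (hZnn : ∀ z, 0 ≤ pZ z)
    (hX1 : ∀ z, ∑ x, pX z x = 1)
    (hY1 : ∀ x z, ∑ y, pY x z y = 1)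
    (p : γ → α → β → ℝ) (hp : ∀ z x y, p z x y = pZ z * pX z x * pY x z y)
    (x₀ : α) (hpos : ∀ z, 0 < pZ z → 0 < pX z x₀) (y : β) :
    (∑ z, pZ z * pY x₀ z y) =
      ∑ z ∈ Finset.univ.filter (fun z => 0 < ∑ y', p z x₀ y'),
        (p z x₀ y / ∑ y', p z x₀ y') * (∑ x, ∑ y', p z x y') := by
  simp only [sum_joint_eq_mul_of_sum_eq_one hY1 hp, ← mul_sum, hX1, mul_one]
  -- by positivity, the `z` outside the filter have `P(Z = z) = 0`
  have hsupport : ∀ z ∈ univ, pZ z * pY x₀ z y ≠ 0 → 0 < pZ z * pX z x₀ := fun z _ hz => by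
    have hZ : 0 < pZ z := (hZnn z).lt_of_ne' (left_ne_zero_of_mul hz)
    exact mul_pos hZ (hpos z hZ)
  rw [← sum_filter_of_ne hsupport]
  refine sum_congr rfl fun z hz => ?_
  have hZX : pZ z * pX z x₀ ≠ 0 := (mem_filter.mp hz).2.ne'
  rw [hp]
  field_simp [left_ne_zero_of_mul hZX, right_ne_zero_of_mul hZX]

/-- Backdoor adjustment in the network Z → X, Z → Y, X → Y.
joint p(z,x,y) = pZ z * pX z x * pY x z y; truncated-product interventional
P(Y=y|do(X=x₀)) = ∑_z pZ z * pY x₀ z y equals the adjustment formula. -/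
theorem backdoor_adjustment
    {γ α β : Type*} [Fintype γ] [Fintype α] [Fintype β]
    (pZ : γ → ℝ) (pX : γ → α → ℝ) (pY : α → γ → β → ℝ)
    (hZnn : ∀ z, 0 ≤ pZ z) (hZ1 : ∑ z, pZ z = 1)
    (hXnn : ∀ z x, 0 ≤ pX z x) (hX1 : ∀ z, ∑ x, pX z x = 1)
    (hYnn : ∀ x z y, 0 ≤ pY x z y) (hY1 : ∀ x z, ∑ y, pY x z y = 1)
    (p : γ → α → β → ℝ) (hp : ∀ z x y, p z x y = pZ z * pX z x * pY x z y)
    (x₀ : α) (hpos : ∀ z, 0 < pZ z → 0 < pX z x₀) (y : β) :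
    (∑ z, pZ z * pY x₀ z y) =
      ∑ z ∈ Finset.univ.filter (fun z => 0 < ∑ y', p z x₀ y'),
        (p z x₀ y / ∑ y', p z x₀ y') * (∑ x, ∑ y', p z x y') :=
  backdoor_adjustment_general pZ pX pY hZnn hX1 hY1 p hp x₀ hpos y
end

section
/- Conditional ignorability (adjustment formula): Let Z, X, Y⁰, Y¹ be random variables with X ∈ {0,1}, Z taking values in a finite type, and Y = if X=1 then Y¹ else Y⁰ the observed outcome. If Y¹ is conditionally independent of X given Z, and P(X=1 ∧ Z=z) > 0 for all z with P(Z=z) > 0, then P(Y¹ = y) = ∑_{z : P(Z=z)>0} P(Y = y | X = 1, Z = z)·P(Z = z). -/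
open scoped Classical

/-- Probability of an event under a pmf on a finite sample space. -/
noncomputable def Pr {Ω : Type*} [Fintype Ω] (p : Ω → ℝ) (A : Ω → Prop) : ℝ :=
  ∑ ω ∈ Finset.univ.filter (fun ω => A ω), p ω

lemma Pr_nonneg {Ω : Type*} [Fintype Ω] (p : Ω → ℝ) (hnn : ∀ ω, 0 ≤ p ω)
    (A : Ω → Prop) : 0 ≤ Pr p A :=
  Finset.sum_nonneg fun ω _ => hnn ω

lemma Pr_mono {Ω : Type*} [Fintype Ω] (p : Ω → ℝ) (hnn : ∀ ω, 0 ≤ p ω)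
    {A B : Ω → Prop} (h : ∀ ω, A ω → B ω) : Pr p A ≤ Pr p B := by
  apply Finset.sum_le_sum_of_subset_of_nonneg
  · intro ω hω
    simp only [Finset.mem_filter, Finset.mem_univ, true_and] at *
    exact h ω hω
  · intro ω _ _; exact hnn ω

/-- Conditional ignorability (adjustment formula). If Y¹ ⟂ X | Z
and P(X=1 ∧ Z=z) > 0 whenever P(Z=z) > 0, then
P(Y¹=y) = ∑_{z : P(Z=z)>0} P(Y=y | X=1, Z=z) · P(Z=z). -/
theorem conditional_ignorability_adjustment
    {Ω β ζ : Type*} [Fintype Ω] [Fintype β] [Fintype ζ]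
    (p : Ω → ℝ) (hnn : ∀ ω, 0 ≤ p ω) (h1 : ∑ ω, p ω = 1)
    (X : Ω → Bool) (Z : Ω → ζ) (Y0 Y1 Y : Ω → β)
    (hY : ∀ ω, Y ω = if X ω = true then Y1 ω else Y0 ω)
    (hci : ∀ (y : β) (x : Bool) (z : ζ), 0 < Pr p (fun ω => Z ω = z) →
      Pr p (fun ω => Y1 ω = y ∧ X ω = x ∧ Z ω = z) / Pr p (fun ω => Z ω = z) =
        (Pr p (fun ω => Y1 ω = y ∧ Z ω = z) / Pr p (fun ω => Z ω = z)) *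
        (Pr p (fun ω => X ω = x ∧ Z ω = z) / Pr p (fun ω => Z ω = z)))
    (hpos : ∀ z : ζ, 0 < Pr p (fun ω => Z ω = z) →
      0 < Pr p (fun ω => X ω = true ∧ Z ω = z))
    (y : β) :
    Pr p (fun ω => Y1 ω = y) =
      ∑ z ∈ Finset.univ.filter (fun z => 0 < Pr p (fun ω => Z ω = z)),
        (Pr p (fun ω => Y ω = y ∧ X ω = true ∧ Z ω = z) /
          Pr p (fun ω => X ω = true ∧ Z ω = z)) * Pr p (fun ω => Z ω = z) := by
  -- Step 1: partition over z
  have hpart : Pr p (fun ω => Y1 ω = y) =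
      ∑ z : ζ, Pr p (fun ω => Y1 ω = y ∧ Z ω = z) := by
    unfold Pr
    rw [Finset.sum_comm' (t' := Finset.univ.filter (fun ω => Y1 ω = y))
        (s' := fun ω => Finset.univ.filter (fun z => Z ω = z))]
    · simp [Finset.filter_eq]
    · intro ω z
      simp only [Finset.mem_filter, Finset.mem_univ, true_and]
      tauto
  rw [hpart]
  -- Step 2: restrict sum to positive-probability z's
  rw [← Finset.sum_filter_add_sum_filter_not Finset.univ
      (fun z => 0 < Pr p (fun ω => Z ω = z))]
  have hzero : ∑ z ∈ Finset.univ.filter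
      (fun z => ¬ 0 < Pr p (fun ω => Z ω = z)),
      Pr p (fun ω => Y1 ω = y ∧ Z ω = z) = 0 := by
    apply Finset.sum_eq_zero
    intro z hz
    simp only [Finset.mem_filter, Finset.mem_univ, true_and, not_lt] at hz
    have h0 : Pr p (fun ω => Z ω = z) = 0 :=
      le_antisymm hz (Pr_nonneg p hnn _)
    have hle : Pr p (fun ω => Y1 ω = y ∧ Z ω = z) ≤ Pr p (fun ω => Z ω = z) :=
      Pr_mono p hnn (fun ω h => h.2)
    exact le_antisymm (h0 ▸ hle) (Pr_nonneg p hnn _)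
  rw [hzero, add_zero]
  -- Step 3: termwise equality
  apply Finset.sum_congr rfl
  intro z hz
  simp only [Finset.mem_filter, Finset.mem_univ, true_and] at hz
  have hxz := hpos z hz
  have hzne := ne_of_gt hz
  have hxzne := ne_of_gt hxz
  -- event equality: Y = y ∧ X = true ∧ Z = z ↔ Y1 = y ∧ X = true ∧ Z = z
  have hev : Pr p (fun ω => Y ω = y ∧ X ω = true ∧ Z ω = z) =
      Pr p (fun ω => Y1 ω = y ∧ X ω = true ∧ Z ω = z) := by
    unfold Pr
    congr 1
    ext ω
    simp only [Finset.mem_filter, Finset.mem_univ, true_and, hY ω]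
    by_cases hx : X ω = true <;> simp [hx]
  rw [hev]
  have := hci y true z hz
  field_simp at this ⊢
  nlinarith [this]
end
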